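/- arXiv:2509.11248 — 3 statements merged into one kernel-verified Lean document; each statement's English description precedes it below -/
import Mathlib

section
/- The function x ↦ 1/(|x|(x+1)(π² + (log|1 + 1/x|)²)) for x ∈ (-1, 0) is a probability density; that is, its integral over (-1,0) equals 1. -/
/-!
With `g x = log |1 + 1/x|`, the integrand is `g' / (π² + g²)`, and `g` increases from `-∞` to `+∞`
on `(-1, 0)`. So `arctan (g / π) / π` is an antiderivative rising from `-1/2` to `1/2`; since the
integrand is nonnegative, it is integrable and the fundamental theorem of calculus applies.
-/

open MeasureTheory Real Set Filter Topology Function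

theorem continuousOn_Icc_update_of_tendsto {f : ℝ → ℝ} {a b fa fb : ℝ} (hab : a < b)
    (hf : ContinuousOn f (Ioo a b)) (ha : Tendsto f (𝓝[>] a) (𝓝 fa))
    (hb : Tendsto f (𝓝[<] b) (𝓝 fb)) :
    ContinuousOn (update (update f a fa) b fb) (Icc a b) := by
  rw [continuousOn_update_iff, continuousOn_update_iff, Icc_sdiff_right, Ico_sdiff_left]
  refine ⟨⟨hf, fun _ => ha.mono_left (nhdsWithin_mono _ Ioo_subset_Ioi_self)⟩, fun _ => ?_⟩
  refine (hb.congr' ?_).mono_left (nhdsWithin_mono _ Ico_subset_Iio_self)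
  filter_upwards [Ioo_mem_nhdsLT hab] with x hx using (update_of_ne hx.1.ne' _ _).symm

theorem integral_Ioo_eq_sub_of_hasDerivAt_of_nonneg {f f' : ℝ → ℝ} {a b fa fb : ℝ} (hab : a < b)
    (hderiv : ∀ x ∈ Ioo a b, HasDerivAt f (f' x) x) (hpos : ∀ x ∈ Ioo a b, 0 ≤ f' x)
    (ha : Tendsto f (𝓝[>] a) (𝓝 fa)) (hb : Tendsto f (𝓝[<] b) (𝓝 fb)) :
    ∫ x in Ioo a b, f' x = fb - fa := by
  have hext : ∀ x ∈ Ioo a b, HasDerivAt (update (update f a fa) b fb) (f' x) x := by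
    refine fun x hx => (hderiv x hx).congr_of_eventuallyEq ?_
    filter_upwards [Ioo_mem_nhds hx.1 hx.2] with y hy
    rw [update_of_ne hy.2.ne, update_of_ne hy.1.ne']
  have hint : IntervalIntegrable f' volume a b := by
    refine intervalIntegral.intervalIntegrable_deriv_of_nonneg (g := update (update f a fa) b fb)
      ?_ ?_ ?_ <;> simp only [uIcc_of_le hab.le, min_eq_left hab.le, max_eq_right hab.le]
    · exact continuousOn_Icc_update_of_tendsto hab
        (fun x hx => (hderiv x hx).continuousAt.continuousWithinAt) ha hb
    · exact hext
    · exact hpos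
  rw [← integral_Ioc_eq_integral_Ioo, ← intervalIntegral.integral_of_le hab.le]
  exact intervalIntegral.integral_eq_sub_of_hasDerivAt_of_tendsto hab hderiv hint ha hb

theorem integral_Ioo_deriv_div_sq_add_sq {g g' : ℝ → ℝ} {a b c : ℝ} (hab : a < b) (hc : 0 < c)
    (hderiv : ∀ x ∈ Ioo a b, HasDerivAt g (g' x) x) (hpos : ∀ x ∈ Ioo a b, 0 ≤ g' x)
    (ha : Tendsto g (𝓝[>] a) atBot) (hb : Tendsto g (𝓝[<] b) atTop) :
    ∫ x in Ioo a b, g' x / (c ^ 2 + g x ^ 2) = π / c := by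
  have hlim : ∀ {l : Filter ℝ} {L : Filter ℝ} {y : ℝ}, Tendsto arctan L (𝓝 y) →
      Tendsto (fun x => g x / c) l L → Tendsto (fun x => arctan (g x / c) / c) l (𝓝 (y / c)) :=
    fun h hg => (h.comp hg).div_const c
  have key := integral_Ioo_eq_sub_of_hasDerivAt_of_nonneg hab
    (f := fun x => arctan (g x / c) / c) (fun x hx => ((hderiv x hx).div_const c).arctan.div_const c)
    (fun x hx => by have := hpos x hx; positivity)
    (hlim (tendsto_nhds_of_tendsto_nhdsWithin tendsto_arctan_atBot) (ha.atBot_div_const hc))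
    (hlim (tendsto_nhds_of_tendsto_nhdsWithin tendsto_arctan_atTop) (hb.atTop_div_const hc))
  convert key using 1
  · refine setIntegral_congr_fun measurableSet_Ioo fun x _ => ?_
    field_simp
  · ring

theorem hasDerivAt_log_abs_one_add_one_div {x : ℝ} (hx : x ∈ Ioo (-1 : ℝ) 0) :
    HasDerivAt (fun y => log |1 + 1 / y|) (1 / (|x| * (x + 1))) x := by
  obtain ⟨hx1, hx0⟩ := hx
  have hx0' : x ≠ 0 := hx0.ne
  have hx1' : x + 1 ≠ 0 := by linarith
  have hne : 1 + x⁻¹ ≠ 0 := by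
    rw [← one_div, one_add_div hx0']; exact div_ne_zero hx1' hx0'
  simp only [log_abs, one_div]
  convert ((hasDerivAt_inv hx0').const_add 1).log hne using 1
  rw [abs_of_neg hx0]
  field_simp

theorem tendsto_log_abs_one_add_one_div_nhdsGT_neg_one :
    Tendsto (fun y : ℝ => log |1 + 1 / y|) (𝓝[>] (-1)) atBot := by
  simp only [log_abs]
  refine tendsto_log_nhdsNE_zero.comp (tendsto_nhdsWithin_iff.2 ⟨?_, ?_⟩)
  · have : ContinuousAt (fun y : ℝ => 1 + 1 / y) (-1) := by fun_prop (disch := norm_num)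
    simpa using this.tendsto.mono_left nhdsWithin_le_nhds
  · filter_upwards [Ioo_mem_nhdsGT (show (-1 : ℝ) < 0 by norm_num)] with y hy
    rw [mem_compl_singleton_iff, one_add_div hy.2.ne]
    exact div_ne_zero (by linarith [hy.1]) hy.2.ne

theorem tendsto_log_abs_one_add_one_div_nhdsLT_zero :
    Tendsto (fun y : ℝ => log |1 + 1 / y|) (𝓝[<] 0) atTop := by
  simp only [one_div]
  exact tendsto_log_atTop.comp
    (tendsto_abs_atBot_atTop.comp (tendsto_atBot_add_const_left _ 1 tendsto_inv_nhdsLT_zero))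

/-- The density of the limiting zero distribution of Fubini polynomials integrates
to one over `(-1,0)`. -/
theorem stmt_4 :
    ∫ x in Set.Ioo (-1 : ℝ) 0,
        1 / (|x| * (x + 1) * (Real.pi ^ 2 + (Real.log |1 + 1 / x|) ^ 2)) = 1 := by
  convert integral_Ioo_deriv_div_sq_add_sq (by norm_num) pi_pos
    (fun _ => hasDerivAt_log_abs_one_add_one_div)
    (fun x hx => one_div_nonneg.2 (mul_nonneg (abs_nonneg x) (by linarith [hx.1])))
    tendsto_log_abs_one_add_one_div_nhdsGT_neg_one tendsto_log_abs_one_add_one_div_nhdsLT_zero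
    using 1
  · simp only [div_div]
  · exact (div_self pi_ne_zero).symm
end

section
/- For every real γ > 1, the function p(x) = sin(π/γ)/(π·|x|·(|x|^{-1/γ} + 2cos(π/γ) + |x|^{1/γ})) for x ∈ (-∞, 0) is a probability density; that is, ∫_{-∞}^0 p(x) dx = 1. -/
/-!
Reflecting to `(0, ∞)` and substituting `x = y ^ γ` turns the density, with `θ = π / γ`, into
`(γ / π) · sin θ / ((y + cos θ)² + sin² θ)`, because `y⁻¹ + 2 cos θ + y = ((y + cos θ)² + sin² θ) / y`.
Its antiderivative is `(γ / π) · arctan ((y + cos θ) / sin θ)`, which increases by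
`(γ / π) · (π / 2 - (π / 2 - θ)) = 1` on `(0, ∞)`.
-/

open MeasureTheory Real Set Filter

theorem integral_Iio_comp_abs {E : Type*} [NormedAddCommGroup E] [NormedSpace ℝ E]
    (f : ℝ → E) : ∫ x in Iio 0, f |x| = ∫ x in Ioi 0, f x := by
  rw [← integral_Iic_eq_integral_Iio, ← neg_zero, ← integral_comp_neg_Iic, neg_zero]
  refine setIntegral_congr_fun measurableSet_Iic fun x hx => ?_
  rw [abs_of_nonpos hx]

theorem inv_add_two_mul_cos_add {x : ℝ} (hx : x ≠ 0) (θ : ℝ) :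
    x⁻¹ + 2 * cos θ + x = ((x + cos θ) ^ 2 + sin θ ^ 2) / x := by
  field_simp
  linear_combination -sin_sq_add_cos_sq θ

theorem integral_Ioi_div_mul_rpow_add_two_cos_add_rpow (a b θ : ℝ) {γ : ℝ} (hγ : 0 < γ) :
    ∫ x in Ioi 0, b / (a * x * (x ^ (-(1 / γ)) + 2 * cos θ + x ^ (1 / γ))) =
      ∫ y in Ioi 0, γ / a * (b / ((y + cos θ) ^ 2 + sin θ ^ 2)) := by
  rw [← integral_comp_rpow_Ioi _ hγ.ne']
  refine setIntegral_congr_fun measurableSet_Ioi fun y (hy : 0 < y) => ?_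
  have hroot : (y ^ γ) ^ (1 / γ) = y := by
    rw [← rpow_mul hy.le, mul_one_div_cancel hγ.ne', rpow_one]
  have hroot_neg : (y ^ γ) ^ (-(1 / γ)) = y⁻¹ := by
    rw [rpow_neg (rpow_nonneg hy.le γ), hroot]
  rw [smul_eq_mul, hroot, hroot_neg, inv_add_two_mul_cos_add hy.ne', abs_of_pos hγ,
    rpow_sub_one hy.ne']
  rcases eq_or_ne a 0 with rfl | ha
  · simp
  rcases eq_or_ne ((y + cos θ) ^ 2 + sin θ ^ 2) 0 with hq | hq
  · simp [hq]
  have hyγ : 0 < y ^ γ := rpow_pos_of_pos hy γ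
  field_simp

theorem integral_Ioi_sin_div_sq_add_sq {θ : ℝ} (h0 : 0 < θ) (hπ : θ < π) :
    ∫ y in Ioi 0, sin θ / ((y + cos θ) ^ 2 + sin θ ^ 2) = θ := by
  have hs : 0 < sin θ := sin_pos_of_pos_of_lt_pi h0 hπ
  set g : ℝ → ℝ := fun y => arctan ((y + cos θ) / sin θ)
  have hderiv : ∀ y ∈ Ioi (0 : ℝ), HasDerivAt g (sin θ / ((y + cos θ) ^ 2 + sin θ ^ 2)) y := by
    intro y _
    have h := (((hasDerivAt_id y).add_const (cos θ)).div_const (sin θ)).arctan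
    refine h.congr_deriv ?_
    simp only [id]
    field_simp
    ring
  have hcont : ContinuousWithinAt g (Ici 0) 0 := by
    unfold g; fun_prop
  have htend : Tendsto g atTop (nhds (π / 2)) :=
    (tendsto_arctan_atTop.mono_right nhdsWithin_le_nhds).comp
      ((tendsto_atTop_add_const_right atTop _ tendsto_id).atTop_div_const hs)
  rw [integral_Ioi_of_hasDerivAt_of_nonneg hcont hderiv (fun y _ => by positivity) htend]
  have hg0 : g 0 = π / 2 - θ := by
    rw [← arctan_tan (x := π / 2 - θ) (by linarith) (by linarith), tan_pi_div_two_sub,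
      tan_eq_sin_div_cos, inv_div]
    simp [g]
  rw [hg0]
  ring

/-- The limiting zero density of generalized Narayana polynomials integrates to one
over `(-∞,0)`, for every real `γ > 1`. -/
theorem stmt_9 (γ : ℝ) (hγ : 1 < γ) :
    ∫ x in Set.Iio (0 : ℝ),
        Real.sin (Real.pi / γ) /
          (Real.pi * |x| *
            (|x| ^ (-(1 / γ)) + 2 * Real.cos (Real.pi / γ) + |x| ^ (1 / γ))) = 1 := by
  have hγ0 : 0 < γ := one_pos.trans hγ
  have hθ : π / γ < π := div_lt_self pi_pos hγ
  rw [integral_Iio_comp_abs (fun x => sin (π / γ) /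
      (π * x * (x ^ (-(1 / γ)) + 2 * cos (π / γ) + x ^ (1 / γ)))),
    integral_Ioi_div_mul_rpow_add_two_cos_add_rpow _ _ _ hγ0, integral_const_mul,
    integral_Ioi_sin_div_sq_add_sq (by positivity) hθ]
  field_simp
end

section
/- For real t > 2, the identity ∫_{-2}^{2} log(t - x)·(1/2π)·√(4 - x²) dx = (t² - t√(t² - 4))/4 + log((t + √(t² - 4))/2) - 1/2 holds. -/
/-!
Write `F(t) = ∫ log (t - x) ρ(x) dx` for the semicircle density `ρ` and `R(t)` for the closed
form. Differentiating under the integral, `F'(t)` is the Stieltjes transform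
`∫ ρ(x) / (t - x) dx`, which an explicit arcsin antiderivative evaluates to
`(t - √(t² - 4)) / 2`; this is also `R'(t)`. Since `ρ` is a probability density on `[-2, 2]`,
`F(t) = log t + o(1)`, and the same holds for `R`, so the constant `F - R` on `(2, ∞)` is zero.
-/

open MeasureTheory Real Set Filter Topology intervalIntegral Metric
open scoped Interval

section LogPotential

variable {f : ℝ → ℝ} {a b : ℝ}

theorem hasDerivAt_integral_log_sub_mul (hf : IntervalIntegrable f volume a b) (hab : a ≤ b)
    {t : ℝ} (ht : b < t) :
    HasDerivAt (fun u => ∫ x in a..b, log (u - x) * f x) (∫ x in a..b, f x / (t - x)) t := by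
  set ε := (t - b) / 2
  have hε : 0 < ε := by simp only [ε]; linarith
  have hsep : ∀ x ∈ Ι a b, ∀ u ∈ ball t ε, ε ≤ u - x := by
    intro x hx u hu
    rw [uIoc_of_le hab] at hx
    rw [mem_ball, Real.dist_eq, abs_lt] at hu
    simp only [ε] at *
    linarith [hx.2]
  have hmeas : AEStronglyMeasurable f (volume.restrict (Ι a b)) := hf.def'.aestronglyMeasurable
  have hlogt : ContinuousOn (fun x => log (t - x)) [[a, b]] := by
    refine (continuousOn_const.sub continuousOn_id).log fun x hx => ?_
    rw [uIcc_of_le hab] at hx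
    exact (sub_pos.2 (hx.2.trans_lt ht)).ne'
  refine (intervalIntegral.hasDerivAt_integral_of_dominated_loc_of_deriv_le
    (F := fun u x => log (u - x) * f x) (F' := fun u x => f x / (u - x))
    (bound := fun x => ε⁻¹ * ‖f x‖) (ball_mem_nhds t hε)
    (.of_forall fun u => ((measurable_log.comp (measurable_const.sub measurable_id))
      |>.aestronglyMeasurable).mul hmeas)
    (hf.continuousOn_mul hlogt)
    (hmeas.div₀ ((measurable_const.sub measurable_id).aestronglyMeasurable))
    (.of_forall fun x hx u hu => ?_) (hf.norm.const_mul _)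
    (.of_forall fun x hx u hu => ?_)).2
  · have hux := hsep x hx u hu
    rw [norm_div, Real.norm_of_nonneg (hε.le.trans hux), div_eq_inv_mul]
    gcongr
  · have hux := hε.trans_le (hsep x hx u hu)
    have := ((hasDerivAt_id u).sub_const x).log hux.ne'
    simpa [div_eq_inv_mul, mul_comm] using this.mul_const (f x)

theorem integral_log_sub_mul_mem_Icc (hf : IntervalIntegrable f volume a b) (hab : a ≤ b)
    (hf0 : ∀ x ∈ Icc a b, 0 ≤ f x) (hf1 : ∫ x in a..b, f x = 1) {t : ℝ} (ht : b < t) :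
    ∫ x in a..b, log (t - x) * f x ∈ Icc (log (t - b)) (log (t - a)) := by
  have hint : IntervalIntegrable (fun x => log (t - x) * f x) volume a b := by
    refine hf.continuousOn_mul ((continuousOn_const.sub continuousOn_id).log fun x hx => ?_)
    rw [uIcc_of_le hab] at hx
    exact (sub_pos.2 (hx.2.trans_lt ht)).ne'
  have hconst (c : ℝ) : ∫ x in a..b, c * f x = c := by
    rw [intervalIntegral.integral_const_mul, hf1, mul_one]
  constructor
  · rw [← hconst (log (t - b))]
    refine integral_mono_on hab (hf.const_mul _) hint fun x hx => ?_
    exact mul_le_mul_of_nonneg_right (log_le_log (by linarith) (by linarith [hx.2])) (hf0 x hx)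
  · rw [← hconst (log (t - a))]
    refine integral_mono_on hab hint (hf.const_mul _) fun x hx => ?_
    exact mul_le_mul_of_nonneg_right (log_le_log (by linarith [hx.2]) (by linarith [hx.1]))
      (hf0 x hx)

theorem tendsto_integral_log_sub_mul_sub_log (hf : IntervalIntegrable f volume a b) (hab : a ≤ b)
    (hf0 : ∀ x ∈ Icc a b, 0 ≤ f x) (hf1 : ∫ x in a..b, f x = 1) :
    Tendsto (fun t => (∫ x in a..b, log (t - x) * f x) - log t) atTop (𝓝 0) := by
  refine tendsto_of_tendsto_of_tendsto_of_le_of_le' (tendsto_log_comp_add_sub_log (-b))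
    (tendsto_log_comp_add_sub_log (-a)) ?_ ?_ <;>
  filter_upwards [eventually_gt_atTop b] with t ht <;>
  have := integral_log_sub_mul_mem_Icc hf hab hf0 hf1 ht <;>
  simp only [← sub_eq_add_neg] <;> linarith [this.1, this.2]

end LogPotential

theorem eqOn_Ioi_of_hasDerivAt_of_tendsto_sub {f g f' : ℝ → ℝ} {c : ℝ}
    (hf : ∀ x ∈ Ioi c, HasDerivAt f (f' x) x) (hg : ∀ x ∈ Ioi c, HasDerivAt g (f' x) x)
    (hfg : Tendsto (fun x => f x - g x) atTop (𝓝 0)) : EqOn f g (Ioi c) := by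
  obtain ⟨k, hk⟩ := isOpen_Ioi.exists_eq_add_of_deriv_eq isPreconnected_Ioi
    (fun x hx => (hf x hx).differentiableAt.differentiableWithinAt)
    (fun x hx => (hg x hx).differentiableAt.differentiableWithinAt)
    (fun x hx => (hf x hx).deriv.trans (hg x hx).deriv.symm)
  have hconst : Tendsto (fun x => f x - g x) atTop (𝓝 k) :=
    tendsto_const_nhds.congr' <| (eventually_gt_atTop c).mono fun x hx => by
      simp only [hk hx]; ring
  obtain rfl := tendsto_nhds_unique hconst hfg
  simpa using hk

section Semicircle

variable {x t : ℝ}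

theorem integral_sqrt_four_sub_sq : ∫ x in (-2)..2, √(4 - x ^ 2) = 2 * π := by
  have hscale : ∀ x : ℝ, √(4 - (2 * x) ^ 2) = 2 * √(1 - x ^ 2) := fun x => by
    rw [show 4 - (2 * x) ^ 2 = 2 ^ 2 * (1 - x ^ 2) by ring, sqrt_mul (by norm_num),
      sqrt_sq (by norm_num)]
  have h := integral_comp_mul_left (fun x => √(4 - x ^ 2)) (two_ne_zero (α := ℝ))
    (a := -1) (b := 1)
  simp only [hscale, intervalIntegral.integral_const_mul, integral_sqrt_one_sub_sq,
    smul_eq_mul] at h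
  norm_num at h
  linarith

theorem hasDerivAt_sqrt_four_sub_sq (hx : x ∈ Ioo (-2) 2) :
    HasDerivAt (fun y => √(4 - y ^ 2)) (-x / √(4 - x ^ 2)) x := by
  have h : 4 - x ^ 2 ≠ 0 := by nlinarith [hx.1, hx.2]
  refine (((hasDerivAt_pow 2 x).const_sub 4).sqrt h).congr_deriv ?_
  field_simp
  ring

theorem hasDerivAt_arcsin_half (hx : x ∈ Ioo (-2) 2) :
    HasDerivAt (fun y => arcsin (y / 2)) (√(4 - x ^ 2))⁻¹ x := by
  have h1 : x / 2 ≠ -1 := by linarith [hx.1]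
  have h2 : x / 2 ≠ 1 := by linarith [hx.2]
  refine ((hasDerivAt_arcsin h1 h2).comp x ((hasDerivAt_id x).div_const 2)).congr_deriv ?_
  rw [show 1 - (x / 2) ^ 2 = (4 - x ^ 2) / 2 ^ 2 by ring, sqrt_div' _ (by norm_num),
    sqrt_sq (by norm_num)]
  have : 0 < √(4 - x ^ 2) := sqrt_pos.2 (by nlinarith [hx.1, hx.2])
  field_simp

theorem hasDerivAt_arcsin_moebius (ht : 2 < t) (hx : x ∈ Ioo (-2) 2) :
    HasDerivAt (fun y => arcsin ((4 - t * y) / (2 * (t - y))))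
      (-√(t ^ 2 - 4) / ((t - x) * √(4 - x ^ 2))) x := by
  obtain ⟨hx1, hx2⟩ := hx
  have htx : 0 < t - x := by linarith
  have hs : 0 < √(t ^ 2 - 4) := sqrt_pos.2 (by nlinarith)
  have hq : 0 < √(4 - x ^ 2) := sqrt_pos.2 (by nlinarith)
  have hs2 : √(t ^ 2 - 4) ^ 2 = t ^ 2 - 4 := sq_sqrt (by nlinarith)
  have hq2 : √(4 - x ^ 2) ^ 2 = 4 - x ^ 2 := sq_sqrt (by nlinarith)
  set g := (4 - t * x) / (2 * (t - x))
  have hg : √(1 - g ^ 2) = √(t ^ 2 - 4) * √(4 - x ^ 2) / (2 * (t - x)) := by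
    rw [← sqrt_sq (by positivity : 0 ≤ √(t ^ 2 - 4) * √(4 - x ^ 2) / (2 * (t - x)))]
    congr 1
    simp only [g, div_pow, mul_pow, hs2, hq2]
    field_simp
    ring
  have hg1 : 0 < 1 - g ^ 2 := by
    rw [← sqrt_pos, hg]; positivity
  have hdg : HasDerivAt (fun y => (4 - t * y) / (2 * (t - y)))
      (-(t ^ 2 - 4) / (2 * (t - x) ^ 2)) x := by
    refine (((hasDerivAt_id' x).const_mul t).const_sub 4 |>.div
      (((hasDerivAt_id' x).const_sub t).const_mul 2) (by positivity)).congr_deriv ?_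
    field_simp
    ring
  refine ((hasDerivAt_arcsin (by nlinarith) (by nlinarith)).comp x hdg).congr_deriv ?_
  rw [hg]
  field_simp
  rw [hs2]

theorem integral_sqrt_four_sub_sq_div_sub (ht : 2 < t) :
    ∫ x in (-2)..2, √(4 - x ^ 2) / (t - x) = π * (t - √(t ^ 2 - 4)) := by
  have htx : ∀ x ∈ Icc (-2 : ℝ) 2, t - x ≠ 0 := fun x hx => by linarith [hx.2]
  have htx2 : ∀ x ∈ Icc (-2 : ℝ) 2, 2 * (t - x) ≠ 0 := fun x hx => by linarith [hx.2]
  -- `x ↦ (4 - t * x) / (2 * (t - x))` maps `[-2, 2]` decreasingly onto `[-1, 1]`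
  let K x := √(t ^ 2 - 4) * arcsin ((4 - t * x) / (2 * (t - x))) + t * arcsin (x / 2) -
    √(4 - x ^ 2)
  have hK : ContinuousOn K (Icc (-2) 2) := by
    have := continuous_arcsin
    fun_prop (disch := assumption)
  have hK' : ∀ x ∈ Ioo (-2 : ℝ) 2, HasDerivAt K (√(4 - x ^ 2) / (t - x)) x := by
    intro x hx
    have hq : √(4 - x ^ 2) ≠ 0 := (sqrt_pos.2 (by nlinarith [hx.1, hx.2])).ne'
    have htx := htx x (Ioo_subset_Icc_self hx)
    refine ((((hasDerivAt_arcsin_moebius ht hx).const_mul _).add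
      ((hasDerivAt_arcsin_half hx).const_mul t)).sub
      (hasDerivAt_sqrt_four_sub_sq hx)).congr_deriv ?_
    field_simp
    linear_combination -sq_sqrt (by nlinarith [hx.1, hx.2] : (0:ℝ) ≤ 4 - x ^ 2) -
      sq_sqrt (by nlinarith : (0:ℝ) ≤ t ^ 2 - 4)
  have hint : IntervalIntegrable (fun x => √(4 - x ^ 2) / (t - x)) volume (-2) 2 :=
    ContinuousOn.intervalIntegrable_of_Icc (by norm_num) (by fun_prop (disch := assumption))
  rw [integral_eq_sub_of_hasDerivAt_of_le (by norm_num) hK hK' hint]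
  have e1 : (4 - t * 2) / (2 * (t - 2)) = -1 := by
    rw [div_eq_iff (by linarith)]; ring
  have e2 : (4 - t * -2) / (2 * (t - -2)) = 1 := by
    rw [div_eq_iff (by linarith)]; ring
  simp only [K, e1, e2]
  norm_num
  ring

noncomputable def semicircleDensity (x : ℝ) : ℝ := 1 / (2 * π) * √(4 - x ^ 2)

theorem intervalIntegrable_semicircleDensity :
    IntervalIntegrable semicircleDensity volume (-2) 2 :=
  (by unfold semicircleDensity; fun_prop : Continuous semicircleDensity).intervalIntegrable _ _

theorem semicircleDensity_nonneg (x : ℝ) : 0 ≤ semicircleDensity x := by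
  unfold semicircleDensity; positivity

theorem integral_semicircleDensity : ∫ x in (-2)..2, semicircleDensity x = 1 := by
  simp only [semicircleDensity, intervalIntegral.integral_const_mul, integral_sqrt_four_sub_sq]
  field_simp

theorem integral_semicircleDensity_div_sub (ht : 2 < t) :
    ∫ x in (-2)..2, semicircleDensity x / (t - x) = (t - √(t ^ 2 - 4)) / 2 := by
  simp only [semicircleDensity, mul_div_assoc, intervalIntegral.integral_const_mul,
    integral_sqrt_four_sub_sq_div_sub ht]
  field_simp

end Semicircle

noncomputable def semicirclePotential (t : ℝ) : ℝ :=
  (t ^ 2 - t * √(t ^ 2 - 4)) / 4 + log ((t + √(t ^ 2 - 4)) / 2) - 1 / 2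

theorem hasDerivAt_semicirclePotential (ht : 2 < t) :
    HasDerivAt semicirclePotential ((t - √(t ^ 2 - 4)) / 2) t := by
  have h4 : t ^ 2 - 4 ≠ 0 := by nlinarith
  have hs : 0 < √(t ^ 2 - 4) := sqrt_pos.2 (by nlinarith)
  have hsqrt := ((hasDerivAt_pow 2 t).sub_const 4).sqrt h4
  have hts : (t + √(t ^ 2 - 4)) / 2 ≠ 0 := by positivity
  refine ((((hasDerivAt_pow 2 t).sub ((hasDerivAt_id' t).mul hsqrt)).div_const 4).add
    ((((hasDerivAt_id' t).add hsqrt).div_const 2).log hts) |>.sub_const (1 / 2)).congr_deriv ?_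
  simp only [Pi.add_apply]
  field_simp
  linear_combination (2 * t + 2 * √(t ^ 2 - 4)) * sq_sqrt (by nlinarith : (0:ℝ) ≤ t ^ 2 - 4)

theorem tendsto_sqrt_sq_sub_four_div_self :
    Tendsto (fun t => √(t ^ 2 - 4) / t) atTop (𝓝 1) := by
  have h : Tendsto (fun t : ℝ => √(1 - 4 / t ^ 2)) atTop (𝓝 1) := by
    simpa using ((tendsto_const_nhds.div_atTop (tendsto_pow_atTop two_ne_zero)).const_sub
      (1 : ℝ)).sqrt
  refine h.congr' ((eventually_gt_atTop 0).mono fun t ht => ?_)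
  rw [show 1 - 4 / t ^ 2 = (t ^ 2 - 4) / t ^ 2 by field_simp, sqrt_div' _ (sq_nonneg t),
    sqrt_sq ht.le]

theorem tendsto_semicirclePotential_sub_log :
    Tendsto (fun t => semicirclePotential t - log t) atTop (𝓝 0) := by
  -- with `s = √(t ^ 2 - 4)`, `(t - s) * (t + s) = 4` turns `R(t) - log t` into `φ (s / t)`
  let φ : ℝ → ℝ := fun r => 1 / (1 + r) - 1 / 2 + log ((1 + r) / 2)
  have hφ : ContinuousAt φ 1 := by fun_prop (disch := norm_num)
  have h := (hφ.tendsto.comp tendsto_sqrt_sq_sub_four_div_self)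
  norm_num [φ] at h
  refine h.congr' ((eventually_gt_atTop 2).mono fun t ht => ?_)
  have hs : 0 < √(t ^ 2 - 4) := sqrt_pos.2 (by nlinarith)
  have ht0 : 0 < t := by linarith
  simp only [Function.comp, semicirclePotential]
  rw [show (1 + √(t ^ 2 - 4) / t) / 2 = (t + √(t ^ 2 - 4)) / 2 / t by field_simp,
    log_div (by positivity) ht0.ne']
  field_simp
  linear_combination (2 * t) * sq_sqrt (by nlinarith : (0:ℝ) ≤ t ^ 2 - 4)

/-- Logarithmic potential of the standard semicircle law at real `t > 2`. -/
theorem stmt_13 (t : ℝ) (ht : 2 < t) :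
    ∫ x in (-2 : ℝ)..2, Real.log (t - x) * (1 / (2 * Real.pi)) * Real.sqrt (4 - x ^ 2) =
      (t ^ 2 - t * Real.sqrt (t ^ 2 - 4)) / 4 +
        Real.log ((t + Real.sqrt (t ^ 2 - 4)) / 2) - 1 / 2 := by
  have hpotential : EqOn (fun u => ∫ x in (-2)..2, log (u - x) * semicircleDensity x)
      semicirclePotential (Ioi 2) := by
    refine eqOn_Ioi_of_hasDerivAt_of_tendsto_sub (fun u hu => ?_)
      (fun u hu => hasDerivAt_semicirclePotential hu) ?_
    · rw [← integral_semicircleDensity_div_sub hu]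
      exact hasDerivAt_integral_log_sub_mul intervalIntegrable_semicircleDensity (by norm_num) hu
    · have := (tendsto_integral_log_sub_mul_sub_log intervalIntegrable_semicircleDensity
        (by norm_num) (fun x _ => semicircleDensity_nonneg x) integral_semicircleDensity).sub
        tendsto_semicirclePotential_sub_log
      simpa using this
  simpa only [semicircleDensity, semicirclePotential, mul_assoc] using hpotential ht
end
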